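/- arXiv:2209.03775 — 2 statements merged into one kernel-verified Lean document; each statement's English description precedes it below -/
import Mathlib

section
/- Let p ≥ 2 be an integer and ζ = exp(2πi/p). For t, z ∈ ℂ and x ∈ [0,1], set R_{p−1}(x,t,z) := ∑_{k=1}^{p−1} (∑_{n≥0} R_{n,p−1,k}(x)·z^n)·t^k, and define R̃_p(x,t,z) := (z^{p−1} + t·z·∫_0^x (d/dv)[(1−v)·R_{p−1}(v,t,z)]·e^{−vtz} dv)·e^{xtz}. Then for every x ∈ [0,1], every z ∈ ℂ with |z| < 1, and every 1 ≤ k ≤ p: ∑_{n≥0} R_{n,p,k}(x)·z^n = (1/p)·∑_{j=0}^{p−1} ζ^{−kj}·R̃_p(x, ζ^j, z). -/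
open MeasureTheory intervalIntegral

/-- `R n p k x` : probability that, in a dart game with `p` remaining players where the
probability of beating the best throw so far is `x`, the `k`-th player in throwing order
wins after exactly `n` further throws. -/
noncomputable def R : ℕ → ℕ → ℕ → ℝ → ℝ
  | 0, p, k, _ => if p = 1 ∧ k = 1 then 1 else 0
  | n + 1, p, k, x =>
      if p ≤ 1 then 0
      else if k = 1 then ∫ v in (0:ℝ)..x, R n p p v
      else (1 - x) * R n (p - 1) (k - 1) x + ∫ v in (0:ℝ)..x, R n p (k - 1) v

/-- `Rgen p x t z = ∑_{k=1}^{p} (∑_{n≥0} R_{n,p,k}(x)·z^n)·t^k`. -/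
noncomputable def Rgen (p : ℕ) (x : ℝ) (t z : ℂ) : ℂ :=
  ∑ k ∈ Finset.Icc 1 p, (∑' n : ℕ, (R n p k x : ℂ) * z ^ n) * t ^ k

/-- `R̃_p(x,t,z) = (z^{p−1} + t·z·∫_0^x (d/dv)[(1−v)·R_{p−1}(v,t,z)]·e^{−vtz} dv)·e^{xtz}`. -/
noncomputable def Rtilde (p : ℕ) (x : ℝ) (t z : ℂ) : ℂ :=
  (z ^ (p - 1) + t * z * ∫ v in (0:ℝ)..x,
      deriv (fun w : ℝ => (1 - (w : ℂ)) * Rgen (p - 1) w t z) v *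
        Complex.exp (-(v : ℂ) * t * z)) *
    Complex.exp ((x : ℂ) * t * z)

/-! For a `p`-th root of unity `t`, the recursion defining `R` turns `G = Rgen p · t z` into the
linear ODE `G' = t z (G + ((1 - x) Rgen (p - 1) x t z)')` with `G 0 = z ^ (p - 1)`, whose solution
by variation of constants is `Rtilde p · t z`; the root-of-unity filter then extracts the
coefficient of `t ^ k`. Termwise differentiation of the series in `z` is justified by the bounds
`0 ≤ R ≤ 1` and `|R'| ≤ 2 n` on `[0, 1]`. -/

open Finset

noncomputable def Rderiv : ℕ → ℕ → ℕ → ℝ → ℝ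
  | 0, _, _, _ => 0
  | n + 1, p, k, x =>
      if p ≤ 1 then 0
      else if k = 1 then R n p p x
      else -R n (p - 1) (k - 1) x + (1 - x) * Rderiv n (p - 1) (k - 1) x + R n p (k - 1) x

section Recursion

variable {n p k : ℕ}

theorem R_succ_of_le_one (hp : p ≤ 1) : R (n + 1) p k = 0 := by
  funext x; simp [R, hp]

theorem R_succ_one (hp : 2 ≤ p) : R (n + 1) p 1 = fun x => ∫ v in (0:ℝ)..x, R n p p v := by
  funext x; simp [R, show ¬p ≤ 1 by omega]

theorem R_succ_of_ne_one (hp : 2 ≤ p) (hk : k ≠ 1) :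
    R (n + 1) p k = fun x =>
      (1 - x) * R n (p - 1) (k - 1) x + ∫ v in (0:ℝ)..x, R n p (k - 1) v := by
  funext x; simp [R, show ¬p ≤ 1 by omega, hk]

theorem Rderiv_succ_of_le_one (hp : p ≤ 1) : Rderiv (n + 1) p k = 0 := by
  funext x; simp [Rderiv, hp]

theorem Rderiv_succ_one (hp : 2 ≤ p) : Rderiv (n + 1) p 1 = R n p p := by
  funext x; simp [Rderiv, show ¬p ≤ 1 by omega]

theorem Rderiv_succ_of_ne_one (hp : 2 ≤ p) (hk : k ≠ 1) :
    Rderiv (n + 1) p k = fun x =>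
      -R n (p - 1) (k - 1) x + (1 - x) * Rderiv n (p - 1) (k - 1) x + R n p (k - 1) x := by
  funext x; simp [Rderiv, show ¬p ≤ 1 by omega, hk]

end Recursion

theorem hasDerivAt_R (n p k : ℕ) (x : ℝ) : HasDerivAt (R n p k) (Rderiv n p k x) x := by
  induction n generalizing p k x with
  | zero => exact hasDerivAt_const x _
  | succ n ih =>
    have hR : ∀ p k, Continuous (R n p k) := fun p k =>
      continuous_iff_continuousAt.2 fun x => (ih p k x).continuousAt
    have hint : ∀ p k, HasDerivAt (fun y => ∫ v in (0:ℝ)..y, R n p k v) (R n p k x) x :=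
      fun p k => ((hR p k).integral_hasStrictDerivAt 0 x).hasDerivAt
    rcases le_or_gt p 1 with hp | hp
    · rw [R_succ_of_le_one hp, Rderiv_succ_of_le_one hp]
      exact hasDerivAt_const x 0
    rcases eq_or_ne k 1 with rfl | hk
    · rw [R_succ_one hp, Rderiv_succ_one hp]
      exact hint p p
    · rw [R_succ_of_ne_one hp hk, Rderiv_succ_of_ne_one hp hk]
      exact ((((hasDerivAt_id x).const_sub 1).mul (ih (p - 1) (k - 1) x)).add
        (hint p (k - 1))).congr_deriv (by simp only [id]; ring)

theorem continuous_R (n p k : ℕ) : Continuous (R n p k) :=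
  continuous_iff_continuousAt.2 fun x => (hasDerivAt_R n p k x).continuousAt

theorem continuous_Rderiv (n p k : ℕ) : Continuous (Rderiv n p k) := by
  induction n generalizing p k with
  | zero => exact continuous_const
  | succ n ih =>
    rcases le_or_gt p 1 with hp | hp
    · rw [Rderiv_succ_of_le_one hp]; exact continuous_const
    rcases eq_or_ne k 1 with rfl | hk
    · rw [Rderiv_succ_one hp]; exact continuous_R n p p
    · rw [Rderiv_succ_of_ne_one hp hk]
      exact ((continuous_R _ _ _).neg.add ((continuous_const.sub continuous_id).mul (ih _ _))).add
        (continuous_R _ _ _)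

theorem intervalIntegral_mem_Icc_of_mem_Icc {f : ℝ → ℝ} {x : ℝ} (hf : Continuous f)
    (hx : 0 ≤ x) (h : ∀ v ∈ Set.Icc 0 x, f v ∈ Set.Icc (0:ℝ) 1) :
    ∫ v in (0:ℝ)..x, f v ∈ Set.Icc 0 x := by
  constructor
  · exact intervalIntegral.integral_nonneg hx fun v hv => (h v hv).1
  · calc ∫ v in (0:ℝ)..x, f v ≤ ∫ v in (0:ℝ)..x, (1:ℝ) :=
          intervalIntegral.integral_mono_on hx (hf.intervalIntegrable 0 x)
            intervalIntegrable_const fun v hv => (h v hv).2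
      _ = x := by simp

theorem R_mem_Icc (n p k : ℕ) {x : ℝ} (hx : x ∈ Set.Icc (0:ℝ) 1) :
    R n p k x ∈ Set.Icc (0:ℝ) 1 := by
  induction n generalizing p k x with
  | zero => simp only [R]; split_ifs <;> simp
  | succ n ih =>
    have hint : ∀ k, ∫ v in (0:ℝ)..x, R n p k v ∈ Set.Icc 0 x := fun k =>
      intervalIntegral_mem_Icc_of_mem_Icc (continuous_R n p k) hx.1
        fun v hv => ih p k ⟨hv.1, hv.2.trans hx.2⟩
    rcases le_or_gt p 1 with hp | hp
    · simp [R_succ_of_le_one hp]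
    rcases eq_or_ne k 1 with rfl | hk
    · rw [R_succ_one hp]
      exact ⟨(hint p).1, (hint p).2.trans hx.2⟩
    · rw [R_succ_of_ne_one hp hk]
      have hR := ih (p - 1) (k - 1) hx
      obtain ⟨h0, h1⟩ := hint (k - 1)
      constructor <;> nlinarith [hx.1, hx.2, hR.1, hR.2]

theorem abs_Rderiv_le (n p k : ℕ) {x : ℝ} (hx : x ∈ Set.Icc (0:ℝ) 1) :
    |Rderiv n p k x| ≤ 2 * n := by
  induction n generalizing p k with
  | zero => simp [Rderiv]
  | succ n ih =>
    rcases le_or_gt p 1 with hp | hp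
    · simp [Rderiv_succ_of_le_one hp]; positivity
    rcases eq_or_ne k 1 with rfl | hk
    · rw [Rderiv_succ_one hp, abs_of_nonneg (R_mem_Icc n p p hx).1]
      push_cast; linarith [(R_mem_Icc n p p hx).2]
    · rw [Rderiv_succ_of_ne_one hp hk]
      obtain ⟨ha0, ha1⟩ := R_mem_Icc n (p - 1) (k - 1) hx
      obtain ⟨hb0, hb1⟩ := R_mem_Icc n p (k - 1) hx
      obtain ⟨hd0, hd1⟩ := abs_le.1 (ih (p - 1) (k - 1))
      rw [abs_le]; push_cast
      constructor <;> nlinarith [hx.1, hx.2]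

theorem R_apply_zero (n : ℕ) {p k : ℕ} (hk : 1 ≤ k) (hkp : k ≤ p) :
    R n p k 0 = if k = p ∧ n = k - 1 then 1 else 0 := by
  induction n generalizing p k with
  | zero => simp only [R]; congr 1; simp only [eq_iff_iff]; omega
  | succ n ih =>
    rcases le_or_gt p 1 with hp | hp
    · simp [R_succ_of_le_one hp]; omega
    rcases eq_or_ne k 1 with rfl | hk1
    · simp [R_succ_one hp]
    · simp only [R_succ_of_ne_one hp hk1, sub_zero, one_mul, intervalIntegral.integral_same,
        add_zero, ih (p := p - 1) (k := k - 1) (by omega) (by omega)]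
      congr 1; simp only [eq_iff_iff]; omega

noncomputable def RSeries (p k : ℕ) (z : ℂ) (x : ℝ) : ℂ :=
  ∑' n : ℕ, (R n p k x : ℂ) * z ^ n

noncomputable def RderivSeries (p k : ℕ) (z : ℂ) (x : ℝ) : ℂ :=
  ∑' n : ℕ, (Rderiv n p k x : ℂ) * z ^ n

section Series

variable {z : ℂ} {x : ℝ}

theorem norm_R_mul_pow_le (n p k : ℕ) (hx : x ∈ Set.Icc (0:ℝ) 1) :
    ‖(R n p k x : ℂ) * z ^ n‖ ≤ ‖z‖ ^ n := by
  have h := R_mem_Icc n p k hx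
  rw [norm_mul, norm_pow, Complex.norm_real, Real.norm_of_nonneg h.1]
  exact mul_le_of_le_one_left (by positivity) h.2

theorem norm_Rderiv_mul_pow_le (n p k : ℕ) (hx : x ∈ Set.Icc (0:ℝ) 1) :
    ‖(Rderiv n p k x : ℂ) * z ^ n‖ ≤ 2 * n * ‖z‖ ^ n := by
  rw [norm_mul, norm_pow, Complex.norm_real, Real.norm_eq_abs]
  exact mul_le_mul_of_nonneg_right (abs_Rderiv_le n p k hx) (by positivity)

theorem summable_two_mul_mul_geometric (hz : ‖z‖ < 1) :
    Summable fun n : ℕ => 2 * n * ‖z‖ ^ n := by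
  simpa [mul_assoc] using
    (summable_pow_mul_geometric_of_norm_lt_one (R := ℝ) 1 (by simpa using hz)).mul_left 2

theorem summable_R_mul_pow (hz : ‖z‖ < 1) (p k : ℕ) (hx : x ∈ Set.Icc (0:ℝ) 1) :
    Summable fun n => (R n p k x : ℂ) * z ^ n :=
  .of_norm_bounded (summable_geometric_of_lt_one (norm_nonneg z) hz)
    fun n => norm_R_mul_pow_le n p k hx

theorem summable_Rderiv_mul_pow (hz : ‖z‖ < 1) (p k : ℕ) (hx : x ∈ Set.Icc (0:ℝ) 1) :
    Summable fun n => (Rderiv n p k x : ℂ) * z ^ n :=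
  .of_norm_bounded (summable_two_mul_mul_geometric hz) fun n => norm_Rderiv_mul_pow_le n p k hx

theorem continuousOn_RSeries (hz : ‖z‖ < 1) (p k : ℕ) :
    ContinuousOn (RSeries p k z) (Set.Icc 0 1) :=
  continuousOn_tsum
    (fun n => ((Complex.continuous_ofReal.comp (continuous_R n p k)).mul
      continuous_const).continuousOn)
    (summable_geometric_of_lt_one (norm_nonneg z) hz) fun n _ hx => norm_R_mul_pow_le n p k hx

theorem continuousOn_RderivSeries (hz : ‖z‖ < 1) (p k : ℕ) :
    ContinuousOn (RderivSeries p k z) (Set.Icc 0 1) :=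
  continuousOn_tsum
    (fun n => ((Complex.continuous_ofReal.comp (continuous_Rderiv n p k)).mul
      continuous_const).continuousOn)
    (summable_two_mul_mul_geometric hz) fun n _ hx => norm_Rderiv_mul_pow_le n p k hx

theorem hasDerivAt_RSeries (hz : ‖z‖ < 1) (p k : ℕ) (hx : x ∈ Set.Ioo (0:ℝ) 1) :
    HasDerivAt (RSeries p k z) (RderivSeries p k z x) x :=
  hasDerivAt_tsum_of_isPreconnected (summable_two_mul_mul_geometric hz) isOpen_Ioo
    isPreconnected_Ioo (fun n y _ => ((hasDerivAt_R n p k y).ofReal_comp).mul_const (z ^ n))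
    (fun n _ hy => norm_Rderiv_mul_pow_le n p k (Set.Ioo_subset_Icc_self hy))
    (show (1 / 2 : ℝ) ∈ Set.Ioo 0 1 by norm_num) (summable_R_mul_pow hz p k (by norm_num)) hx

theorem RderivSeries_eq_mul_tsum_succ {p k : ℕ} (hz : ‖z‖ < 1)
    (hx : x ∈ Set.Icc (0:ℝ) 1) :
    RderivSeries p k z x = z * ∑' n : ℕ, (Rderiv (n + 1) p k x : ℂ) * z ^ n := by
  rw [RderivSeries, (summable_Rderiv_mul_pow hz p k hx).tsum_eq_zero_add, ← tsum_mul_left]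
  simp only [Rderiv, Complex.ofReal_zero, zero_mul, zero_add, pow_succ]
  exact tsum_congr fun n => by ring

theorem RderivSeries_one {p : ℕ} (hz : ‖z‖ < 1) (hp : 2 ≤ p)
    (hx : x ∈ Set.Icc (0:ℝ) 1) :
    RderivSeries p 1 z x = z * RSeries p p z x := by
  simp only [RderivSeries_eq_mul_tsum_succ hz hx, Rderiv_succ_one hp, RSeries]

theorem RderivSeries_of_ne_one {p k : ℕ} (hz : ‖z‖ < 1) (hp : 2 ≤ p) (hk : k ≠ 1)
    (hx : x ∈ Set.Icc (0:ℝ) 1) :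
    RderivSeries p k z x = z * (-RSeries (p - 1) (k - 1) z x
      + (1 - x) * RderivSeries (p - 1) (k - 1) z x + RSeries p (k - 1) z x) := by
  have ha := (summable_R_mul_pow hz (p - 1) (k - 1) hx).neg
  have hb := (summable_Rderiv_mul_pow hz (p - 1) (k - 1) hx).mul_left (1 - (x : ℂ))
  have hc := summable_R_mul_pow hz p (k - 1) hx
  rw [RderivSeries_eq_mul_tsum_succ hz hx]
  congr 1
  rw [RSeries, RSeries, RderivSeries, ← tsum_neg, ← tsum_mul_left, ← ha.tsum_add hb,
    ← (ha.add hb).tsum_add hc]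
  exact tsum_congr fun n => by rw [Rderiv_succ_of_ne_one hp hk]; push_cast; ring

theorem RSeries_apply_zero {p k : ℕ} (hk : 1 ≤ k) (hkp : k ≤ p) :
    RSeries p k z 0 = if k = p then z ^ (p - 1) else 0 := by
  simp only [RSeries, R_apply_zero _ hk hkp]
  split_ifs with hkp'
  · subst hkp'
    exact (tsum_eq_single (k - 1) fun n hn => by simp [hn]).trans (by simp)
  · simp [hkp']

end Series

theorem sum_Icc_one_eq_add_sum_succ {M : Type*} [AddCommMonoid M] (f : ℕ → M) {p : ℕ}
    (hp : 1 ≤ p) : ∑ k ∈ Icc 1 p, f k = f 1 + ∑ k ∈ Icc 1 (p - 1), f (k + 1) := by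
  have hmap : (Icc 1 (p - 1)).map (addRightEmbedding 1) = Icc (1 + 1) p := by
    rw [map_add_right_Icc]; congr 1; omega
  rw [← insert_Icc_add_one_left_eq_Icc hp, sum_insert (by simp), ← hmap, sum_map]
  rfl

theorem sum_Icc_one_eq_sum_add_top {M : Type*} [AddCommMonoid M] (f : ℕ → M) {p : ℕ}
    (hp : 1 ≤ p) : ∑ k ∈ Icc 1 p, f k = ∑ k ∈ Icc 1 (p - 1), f k + f p := by
  obtain ⟨q, rfl⟩ := Nat.exists_eq_add_of_le' hp
  rw [sum_Icc_succ_top (by omega), Nat.add_sub_cancel]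

theorem eq_integral_mul_exp_of_hasDerivAt {g f : ℝ → ℂ} {c : ℂ} {x : ℝ} (hx : 0 ≤ x)
    (hg : ContinuousOn g (Set.Icc 0 x)) (hf : ContinuousOn f (Set.Icc 0 x))
    (hderiv : ∀ v ∈ Set.Ioo 0 x, HasDerivAt g (c * (g v + f v)) v) :
    g x = (g 0 + c * ∫ v in (0:ℝ)..x, f v * Complex.exp (-v * c)) * Complex.exp (x * c) := by
  have hexp : ∀ v : ℝ, HasDerivAt (fun w : ℝ => Complex.exp (-w * c))
      (Complex.exp (-v * c) * (-c)) v := fun v =>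
    (((hasDerivAt_id v).ofReal_comp.neg).mul_const c).cexp.congr_deriv (by simp)
  have hFTC := intervalIntegral.integral_eq_sub_of_hasDerivAt_of_le hx
    (hg.mul (Complex.continuous_exp.comp (by fun_prop)).continuousOn)
    (fun v hv => ((hderiv v hv).mul (hexp v)).congr_deriv
      (show _ = c * (f v * Complex.exp (-v * c)) by ring))
    ((continuousOn_const.mul (hf.mul (Complex.continuous_exp.comp (by fun_prop)).continuousOn)
      ).intervalIntegrable_of_Icc hx)
  simp only [Pi.mul_apply, Function.comp_apply, intervalIntegral.integral_const_mul] at hFTC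
  rw [hFTC, Complex.ofReal_zero, neg_zero, zero_mul, Complex.exp_zero, mul_one, add_sub_cancel,
    mul_assoc, ← Complex.exp_add, neg_mul, neg_add_cancel, Complex.exp_zero, mul_one]

noncomputable def derivOneSubMulRgen (q : ℕ) (t z : ℂ) (x : ℝ) : ℂ :=
  ∑ k ∈ Icc 1 q, (-RSeries q k z x + (1 - x) * RderivSeries q k z x) * t ^ k

theorem Rgen_eq_sum_RSeries (p : ℕ) (x : ℝ) (t z : ℂ) :
    Rgen p x t z = ∑ k ∈ Icc 1 p, RSeries p k z x * t ^ k := rfl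

theorem Rgen_apply_zero {p : ℕ} (hp : 1 ≤ p) (t z : ℂ) :
    Rgen p 0 t z = z ^ (p - 1) * t ^ p := by
  rw [Rgen_eq_sum_RSeries, sum_congr rfl fun k hk => by
    rw [RSeries_apply_zero (mem_Icc.1 hk).1 (mem_Icc.1 hk).2, ite_mul, zero_mul],
    sum_ite_eq' _ _ (fun k => z ^ (p - 1) * t ^ k), if_pos (mem_Icc.2 ⟨hp, le_rfl⟩)]

section Rgen

variable {z : ℂ} {x : ℝ}

theorem hasDerivAt_Rgen_sum (hz : ‖z‖ < 1) (p : ℕ) (t : ℂ) (hx : x ∈ Set.Ioo (0:ℝ) 1) :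
    HasDerivAt (fun w : ℝ => Rgen p w t z) (∑ k ∈ Icc 1 p, RderivSeries p k z x * t ^ k) x :=
  HasDerivAt.fun_sum fun k _ => (hasDerivAt_RSeries hz p k hx).mul_const _

theorem hasDerivAt_one_sub_mul_Rgen (hz : ‖z‖ < 1) (q : ℕ) (t : ℂ)
    (hx : x ∈ Set.Ioo (0:ℝ) 1) :
    HasDerivAt (fun w : ℝ => (1 - (w : ℂ)) * Rgen q w t z) (derivOneSubMulRgen q t z x) x := by
  refine (((hasDerivAt_id x).ofReal_comp.const_sub 1).mul
    (hasDerivAt_Rgen_sum hz q t hx)).congr_deriv ?_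
  simp only [Rgen_eq_sum_RSeries, derivOneSubMulRgen, id, Complex.ofReal_one, mul_sum,
    ← sum_add_distrib]
  exact sum_congr rfl fun k _ => by ring

/-- The shift `k ↦ k - 1` in the recursion for `R` becomes multiplication by `t`, cyclically
since `t ^ p = 1`. -/
theorem hasDerivAt_Rgen {p : ℕ} {t : ℂ} (hz : ‖z‖ < 1) (hp : 2 ≤ p) (ht : t ^ p = 1)
    (hx : x ∈ Set.Ioo (0:ℝ) 1) :
    HasDerivAt (fun w : ℝ => Rgen p w t z)
      (t * z * (Rgen p x t z + derivOneSubMulRgen (p - 1) t z x)) x := by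
  have hx' := Set.Ioo_subset_Icc_self hx
  refine (hasDerivAt_Rgen_sum hz p t hx).congr_deriv ?_
  rw [sum_Icc_one_eq_add_sum_succ _ (by omega), RderivSeries_one hz hp hx', Rgen_eq_sum_RSeries,
    sum_Icc_one_eq_sum_add_top (fun k => RSeries p k z x * t ^ k) (by omega), ht,
    derivOneSubMulRgen,
    sum_congr rfl fun k hk => by
      rw [RderivSeries_of_ne_one hz hp (by simp at hk; omega) hx', Nat.add_sub_cancel]]
  have hterm : ∀ k : ℕ, z * (-RSeries (p - 1) k z x + (1 - x) * RderivSeries (p - 1) k z x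
      + RSeries p k z x) * t ^ (k + 1) = t * z * (RSeries p k z x * t ^ k)
        + t * z * ((-RSeries (p - 1) k z x + (1 - x) * RderivSeries (p - 1) k z x) * t ^ k) :=
    fun k => by ring
  simp_rw [hterm, sum_add_distrib, ← mul_sum]
  ring

theorem continuousOn_Rgen (hz : ‖z‖ < 1) (p : ℕ) (t : ℂ) :
    ContinuousOn (fun w : ℝ => Rgen p w t z) (Set.Icc 0 1) :=
  continuousOn_finsetSum _ fun k _ => (continuousOn_RSeries hz p k).mul continuousOn_const

theorem continuousOn_derivOneSubMulRgen (hz : ‖z‖ < 1) (q : ℕ) (t : ℂ) :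
    ContinuousOn (derivOneSubMulRgen q t z) (Set.Icc 0 1) :=
  continuousOn_finsetSum _ fun k _ => ((continuousOn_RSeries hz q k).neg.add
    ((continuous_const.sub Complex.continuous_ofReal).continuousOn.mul
      (continuousOn_RderivSeries hz q k))).mul continuousOn_const

theorem integral_deriv_one_sub_mul_Rgen_mul (hz : ‖z‖ < 1) (q : ℕ) (t : ℂ) (g : ℝ → ℂ)
    (hx : x ∈ Set.Icc (0:ℝ) 1) :
    ∫ v in (0:ℝ)..x, deriv (fun w : ℝ => (1 - (w : ℂ)) * Rgen q w t z) v * g v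
      = ∫ v in (0:ℝ)..x, derivOneSubMulRgen q t z v * g v :=
  intervalIntegral.integral_congr_Ioo_of_le hx.1 fun v hv => by
    rw [(hasDerivAt_one_sub_mul_Rgen hz q t ⟨hv.1, hv.2.trans_le hx.2⟩).deriv]

theorem Rgen_eq_Rtilde {p : ℕ} {t : ℂ} (hz : ‖z‖ < 1) (hp : 2 ≤ p) (ht : t ^ p = 1)
    (hx : x ∈ Set.Icc (0:ℝ) 1) : Rgen p x t z = Rtilde p x t z := by
  have hsub : Set.Icc 0 x ⊆ Set.Icc (0:ℝ) 1 := Set.Icc_subset_Icc le_rfl hx.2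
  rw [eq_integral_mul_exp_of_hasDerivAt (c := t * z) hx.1 ((continuousOn_Rgen hz p t).mono hsub)
      ((continuousOn_derivOneSubMulRgen hz (p - 1) t).mono hsub)
      fun v hv => hasDerivAt_Rgen hz hp ht ⟨hv.1, hv.2.trans_le hx.2⟩,
    Rtilde, integral_deriv_one_sub_mul_Rgen_mul hz _ _ _ hx, Rgen_apply_zero (by omega), ht]
  simp only [mul_one, mul_assoc, neg_mul]

end Rgen

namespace IsPrimitiveRoot

variable {K : Type*} [Field K] {ζ : K} {p : ℕ}

theorem sum_zpow_neg_mul_pow (hζ : IsPrimitiveRoot ζ p) (k k' : ℕ) :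
    ∑ j ∈ range p, ζ ^ (-(k * j : ℤ)) * (ζ ^ j) ^ k'
      = if (p : ℤ) ∣ (k' : ℤ) - k then (p : K) else 0 := by
  rcases p.eq_zero_or_pos with rfl | hp
  · simp
  have hζ0 : ζ ≠ 0 := hζ.ne_zero hp.ne'
  set w := ζ ^ ((k' : ℤ) - k)
  have hterm : ∀ j : ℕ, ζ ^ (-(k * j : ℤ)) * (ζ ^ j) ^ k' = w ^ j := fun j => by
    rw [← pow_mul, ← zpow_natCast ζ (j * k'), ← zpow_add₀ hζ0, ← zpow_natCast w,
      ← zpow_mul]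
    push_cast; ring_nf
  simp_rw [hterm]
  split_ifs with hdvd
  · simp [w, (hζ.zpow_eq_one_iff_dvd _).2 hdvd]
  · have hwp : w ^ p = 1 := by
      rw [← zpow_natCast, ← zpow_mul, mul_comm, zpow_mul, zpow_natCast, hζ.pow_eq_one,
        one_zpow]
    rw [geom_sum_eq (mt (hζ.zpow_eq_one_iff_dvd _).1 hdvd), hwp, sub_self, zero_div]

theorem sum_zpow_neg_mul_sum_Icc (hζ : IsPrimitiveRoot ζ p) (c : ℕ → K) {k : ℕ}
    (hk : k ∈ Icc 1 p) :
    ∑ j ∈ range p, ζ ^ (-(k * j : ℤ)) * ∑ k' ∈ Icc 1 p, c k' * (ζ ^ j) ^ k'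
      = p * c k := by
  simp_rw [mul_sum, mul_left_comm _ (c _)]
  rw [sum_comm]
  simp_rw [← mul_sum, hζ.sum_zpow_neg_mul_pow]
  rw [sum_eq_single_of_mem k hk fun k' hk' hne => ?_]
  · simp [mul_comm]
  rw [if_neg, mul_zero]
  intro hdvd
  have hk' := mem_Icc.1 hk'
  have hk := mem_Icc.1 hk
  exact hne (by
    have := Int.eq_zero_of_abs_lt_dvd hdvd (abs_sub_lt_iff.2 ⟨by omega, by omega⟩)
    omega)

end IsPrimitiveRoot

/-- For `p ≥ 2`, `ζ = e^{2πi/p}`, `x ∈ [0,1]`, `|z| < 1` and `1 ≤ k ≤ p`: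
`∑_{n≥0} R_{n,p,k}(x)·z^n = (1/p)·∑_{j=0}^{p−1} ζ^{−kj}·R̃_p(x, ζ^j, z)`. -/
theorem Rgen_root_of_unity_extraction (p : ℕ) (hp : 2 ≤ p) (x : ℝ)
    (hx : x ∈ Set.Icc (0:ℝ) 1) (z : ℂ) (hz : ‖z‖ < 1)
    (k : ℕ) (hk1 : 1 ≤ k) (hkp : k ≤ p) :
    (∑' n : ℕ, (R n p k x : ℂ) * z ^ n)
      = (1 / p) * ∑ j ∈ Finset.range p,
          Complex.exp (2 * Real.pi * Complex.I / p) ^ (-(k * j : ℤ)) *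
            Rtilde p x (Complex.exp (2 * Real.pi * Complex.I / p) ^ j) z := by
  set ζ := Complex.exp (2 * Real.pi * Complex.I / p)
  have hζ : IsPrimitiveRoot ζ p := Complex.isPrimitiveRoot_exp p (by omega)
  have hRtilde : ∀ j : ℕ, Rtilde p x (ζ ^ j) z = Rgen p x (ζ ^ j) z := fun j =>
    (Rgen_eq_Rtilde hz hp (by rw [← pow_mul, mul_comm, pow_mul, hζ.pow_eq_one, one_pow]) hx).symm
  simp only [hRtilde, Rgen_eq_sum_RSeries]
  rw [hζ.sum_zpow_neg_mul_sum_Icc _ (mem_Icc.2 ⟨hk1, hkp⟩), RSeries, one_div,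
    inv_mul_cancel_left₀ (Nat.cast_ne_zero.2 (by omega))]
end

section
/- Let w_{n,p,k,s} denote the number of permutations π of {1,…,n} that encode a complete p-player dart game whose winner is player k and that satisfy π(1) = s. Then for all integers n ≥ 3, p ≥ 2, 1 ≤ k ≤ p and 1 ≤ s ≤ n: if k = 1, then w_{n,p,1,s} = ∑_{s'=1}^{s−1} w_{n−1,p,p,s'} + (n−s)·w_{n−1,p−1,1,s}; if k = 2, then w_{n,p,2,s} = ∑_{s'=1}^{s−1} w_{n−1,p,1,s'}; and if 3 ≤ k ≤ p, then w_{n,p,k,s} = ∑_{s'=1}^{s−1} w_{n−1,p,k−1,s'} + (n−s)·w_{n−1,p−1,k−1,s}. -/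
/-- Process a list of throw results (`true` = the thrower stays in the game and moves to
the back of the queue, `false` = the thrower is eliminated) on a queue of players. -/
def playGame : List Bool → List ℕ → List ℕ
  | [], q => q
  | _ :: bs, [] => playGame bs []
  | b :: bs, a :: q => playGame bs (if b then q ++ [a] else q)

/-- The list recording, for each position `i = 1, …, n`, whether position `i` is a
left-to-right minimum of the permutation `π` (i.e. `π i < π j` for all `j < i`). -/
def ltrMins {n : ℕ} (π : Equiv.Perm (Fin n)) : List Bool :=
  (List.finRange n).map fun i => decide (∀ j, j < i → π i < π j)

/-- `π` encodes a complete `p`-player dart game whose winner is player `k`: starting from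
the queue `[1, …, p]`, after all `n` throws exactly player `k` remains, and at least two
players remained before the last throw. -/
def EncodesWin (n p k : ℕ) (π : Equiv.Perm (Fin n)) : Prop :=
  playGame (ltrMins π) (List.range' 1 p) = [k] ∧
    (n = 0 ∨ 2 ≤ (playGame ((ltrMins π).take (n - 1)) (List.range' 1 p)).length)

/-- `w n p k s` : the number of permutations `π` of `{1, …, n}` encoding a complete
`p`-player dart game won by player `k` and whose first entry is `π(1) = s`
(entries taken in `{1, …, n}`). -/
noncomputable def w (n p k s : ℕ) : ℕ :=
  {π : Equiv.Perm (Fin n) | EncodesWin n p k π ∧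
      ∀ i : Fin n, (i : ℕ) = 0 → (π i : ℕ) + 1 = s}.ncard

/-!
Sort the permutations `π` with `π(1) = s` by comparing `π(2)` with `π(1)`.

If `π(2) < π(1)`, deleting the first entry leaves a permutation `σ` of `n - 1` letters with
`σ(1) < s`, and every left-to-right minimum of `σ` is still one of `π`. The first throw keeps
player 1 in the game, so the rest of the game of `π` is the game of `σ` played by the queue
`[2, …, p, 1]`, i.e. with its players relabelled by a rotation.

If `π(2) > π(1)`, the second throw eliminates player 2, so player 2 cannot win. Deleting the
second entry, which can be any of the `n - s` values above `s`, leaves a permutation with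
first entry `s`. Its `(p - 1)`-player game, relabelled so that the label `2` is skipped, is the
rest of the game of `π`.
-/

namespace DartGame

open Equiv

theorem playGame_nil_right (bs : List Bool) : playGame bs [] = [] := by
  induction bs with
  | nil => rfl
  | cons b bs ih => exact ih

theorem playGame_map (f : ℕ → ℕ) (bs : List Bool) (q : List ℕ) :
    playGame bs (q.map f) = (playGame bs q).map f := by
  induction bs generalizing q with
  | nil => rfl
  | cons b bs ih =>
    cases q with
    | nil => exact ih []
    | cons a q => cases b <;> simp [playGame, ← ih]

theorem mem_of_mem_playGame {x : ℕ} {bs : List Bool} {q : List ℕ} (h : x ∈ playGame bs q) :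
    x ∈ q := by
  induction bs generalizing q with
  | nil => exact h
  | cons b bs ih =>
    cases q with
    | nil => exact ih h
    | cons a q =>
      have := ih h
      cases b <;> simp_all [or_comm]

/-- Relabelling `[1, …, p]` by `rotateLabel p` gives the queue `[2, …, p, 1]` left after a
surviving first throw. -/
def rotateLabel (p x : ℕ) : ℕ := if x = p then 1 else x + 1

/-- Relabelling `[2, …, p - 1, 1]` by `skipTwo` gives `[3, …, p, 1]`, the queue left after a
surviving first throw and an eliminating second one. -/
def skipTwo (x : ℕ) : ℕ := if x = 1 then 1 else x + 1

theorem rotateLabel_self (p : ℕ) : rotateLabel p p = 1 := if_pos rfl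

theorem rotateLabel_of_ne {p x : ℕ} (hx : x ≠ p) : rotateLabel p x = x + 1 := if_neg hx

theorem skipTwo_one : skipTwo 1 = 1 := rfl

theorem skipTwo_of_ne {x : ℕ} (hx : x ≠ 1) : skipTwo x = x + 1 := if_neg hx

theorem rotateLabel_injOn (p : ℕ) : Set.InjOn (rotateLabel p) (Set.Ici 1) := by
  intro x hx y hy h
  simp only [rotateLabel, Set.mem_Ici] at *
  split_ifs at h <;> omega

theorem skipTwo_injOn : Set.InjOn skipTwo (Set.Ici 1) := by
  intro x hx y hy h
  simp only [skipTwo, Set.mem_Ici] at *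
  split_ifs at h <;> omega

theorem skipTwo_ne_two (x : ℕ) : skipTwo x ≠ 2 := by
  unfold skipTwo
  split_ifs <;> omega

theorem playGame_true_cons (p : ℕ) (bs : List Bool) :
    playGame (true :: bs) (List.range' 1 p) =
      (playGame bs (List.range' 1 p)).map (rotateLabel p) := by
  rcases p with _ | p
  · simp [playGame_nil_right]
  have hqueue : List.range' 2 p ++ [1] = (List.range' 1 (p + 1)).map (rotateLabel (p + 1)) := by
    have hshift : (List.range' 1 p).map (rotateLabel (p + 1)) = List.range' 2 p := by
      rw [List.map_congr_left (g := fun x => 1 + x), List.map_add_range']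
      intro x hx
      simp only [rotateLabel, List.mem_range'_1] at *
      split_ifs <;> omega
    simp [List.range'_concat, hshift, rotateLabel, add_comm]
  calc playGame (true :: bs) (List.range' 1 (p + 1))
      = playGame bs (List.range' 2 p ++ [1]) := rfl
    _ = _ := by rw [hqueue, playGame_map]

theorem playGame_true_false_cons {p : ℕ} (hp : 2 ≤ p) (bs : List Bool) :
    playGame (true :: false :: bs) (List.range' 1 p) =
      (playGame (true :: bs) (List.range' 1 (p - 1))).map skipTwo := by
  obtain ⟨p, rfl⟩ : ∃ q, p = q + 2 := ⟨p - 2, by omega⟩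
  have hqueue : List.range' 3 p ++ [1] = (List.range' 2 p ++ [1]).map skipTwo := by
    have hshift : (List.range' 2 p).map skipTwo = List.range' 3 p := by
      rw [List.map_congr_left (g := fun x => 1 + x), List.map_add_range']
      intro x hx
      simp only [skipTwo, List.mem_range'_1] at *
      split_ifs <;> omega
    simp [hshift, skipTwo]
  calc playGame (true :: false :: bs) (List.range' 1 (p + 2))
      = playGame bs (List.range' 3 p ++ [1]) := rfl
    _ = (playGame bs (List.range' 2 p ++ [1])).map skipTwo := by rw [hqueue, playGame_map]

theorem map_eq_singleton_iff_of_injOn {α β : Type*} {f : α → β} {s : Set α} (hf : s.InjOn f)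
    {l : List α} (hl : ∀ y ∈ l, y ∈ s) {x : α} (hx : x ∈ s) :
    l.map f = [f x] ↔ l = [x] := by
  rw [List.map_eq_singleton_iff]
  constructor
  · rintro ⟨y, rfl, hy⟩
    rw [hf (hl y (by simp)) hx hy]
  · rintro rfl
    exact ⟨x, rfl, rfl⟩

def CompleteWin (p k : ℕ) (bs : List Bool) : Prop :=
  playGame bs (List.range' 1 p) = [k] ∧ 2 ≤ (playGame bs.dropLast (List.range' 1 p)).length

theorem completeWin_iff_of_relabel {f : ℕ → ℕ} (hf : Set.InjOn f (Set.Ici 1)) {p k : ℕ}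
    (hk : 1 ≤ k) {bs bs' : List Bool} {q : List ℕ} (hq : ∀ x ∈ q, 1 ≤ x)
    (hfull : playGame bs (List.range' 1 p) = (playGame bs' q).map f)
    (hprefix : playGame bs.dropLast (List.range' 1 p) = (playGame bs'.dropLast q).map f) :
    CompleteWin p (f k) bs ↔ playGame bs' q = [k] ∧ 2 ≤ (playGame bs'.dropLast q).length := by
  rw [CompleteWin, hfull, hprefix, List.length_map,
    map_eq_singleton_iff_of_injOn hf (fun y hy => hq y (mem_of_mem_playGame hy)) hk]

theorem completeWin_true_cons {p k : ℕ} (hk : 1 ≤ k) {bs : List Bool} (hbs : bs ≠ []) :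
    CompleteWin p (rotateLabel p k) (true :: bs) ↔ CompleteWin p k bs :=
  completeWin_iff_of_relabel (rotateLabel_injOn p) hk (fun _ hx => (List.mem_range'_1.mp hx).1)
    (playGame_true_cons p bs)
    (by rw [List.dropLast_cons_of_ne_nil hbs, playGame_true_cons])

theorem completeWin_true_false_cons {p k : ℕ} (hp : 2 ≤ p) (hk : 1 ≤ k) {bs : List Bool}
    (hbs : bs ≠ []) :
    CompleteWin p (skipTwo k) (true :: false :: bs) ↔ CompleteWin (p - 1) k (true :: bs) :=
  completeWin_iff_of_relabel skipTwo_injOn hk (fun _ hx => (List.mem_range'_1.mp hx).1)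
    (playGame_true_false_cons hp bs)
    (by simp only [List.dropLast_cons_of_ne_nil hbs, ne_eq, reduceCtorEq, not_false_eq_true,
      List.dropLast_cons_of_ne_nil, playGame_true_false_cons hp])

theorem not_completeWin_two {p : ℕ} (hp : 2 ≤ p) (bs : List Bool) :
    ¬ CompleteWin p 2 (true :: false :: bs) := by
  rintro ⟨hwin, -⟩
  rw [playGame_true_false_cons hp, List.map_eq_singleton_iff] at hwin
  obtain ⟨x, -, hx⟩ := hwin
  exact skipTwo_ne_two x hx

abbrev IsLTRMin {n : ℕ} (π : Perm (Fin n)) (i : Fin n) : Prop := ∀ j, j < i → π i < π j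

section LTRMin

variable {m : ℕ}

theorem IsLTRMin.le_apply_zero {π : Perm (Fin (m + 1))} {j : Fin (m + 1)} (h : IsLTRMin π j) :
    π j ≤ π 0 := by
  rcases (Fin.zero_le j).eq_or_lt with rfl | hj
  · exact le_rfl
  · exact (h 0 hj).le

theorem ltrMins_succ (π : Perm (Fin (m + 1))) :
    ltrMins π = true :: (List.finRange m).map fun j => decide (IsLTRMin π j.succ) := by
  simp [ltrMins, List.finRange_succ]

end LTRMin

section InsertAt

variable {m : ℕ}

/-- The permutation of `Fin (m + 2)` taking the value `a` at position `i` whose other values,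
read in order, are order-isomorphic to `σ`. -/
def insertAt (i a : Fin (m + 2)) (σ : Perm (Fin (m + 1))) : Perm (Fin (m + 2)) :=
  (finSuccEquiv' i).trans (σ.optionCongr.trans (finSuccEquiv' a).symm)

@[simp] theorem insertAt_apply_self (i a : Fin (m + 2)) (σ : Perm (Fin (m + 1))) :
    insertAt i a σ i = a := by
  simp [insertAt, finSuccEquiv'_at]

@[simp] theorem insertAt_apply_succAbove (i a : Fin (m + 2)) (σ : Perm (Fin (m + 1)))
    (j : Fin (m + 1)) : insertAt i a σ (i.succAbove j) = a.succAbove (σ j) := by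
  simp [insertAt, finSuccEquiv'_succAbove]

theorem insertAt_zero_apply_one (a : Fin (m + 2)) (σ : Perm (Fin (m + 1))) :
    insertAt 0 a σ 1 = a.succAbove (σ 0) := by
  simpa using insertAt_apply_succAbove 0 a σ 0

theorem insertAt_one_apply_zero (a : Fin (m + 2)) (σ : Perm (Fin (m + 1))) :
    insertAt 1 a σ 0 = a.succAbove (σ 0) := by
  simpa using insertAt_apply_succAbove 1 a σ 0

theorem insertAt_injective (i : Fin (m + 2)) :
    Function.Injective (Function.uncurry (insertAt i)) := by
  rintro ⟨a, σ⟩ ⟨b, τ⟩ h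
  have hab : a = b := by simpa using congrArg (· i) h
  subst hab
  have hστ : σ = τ := Equiv.ext fun j => by simpa using congrArg (· (i.succAbove j)) h
  rw [hστ]

theorem insertAt_bijective (i : Fin (m + 2)) :
    Function.Bijective (Function.uncurry (insertAt i)) := by
  rw [Fintype.bijective_iff_injective_and_card]
  refine ⟨insertAt_injective i, ?_⟩
  simp [Fintype.card_perm, Nat.factorial_succ]

theorem ncard_eq_ncard_preimage_insertAt (i : Fin (m + 2)) (S : Set (Perm (Fin (m + 2)))) :
    S.ncard = (Function.uncurry (insertAt i) ⁻¹' S).ncard := by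
  rw [← Set.ncard_image_of_injective _ (insertAt_bijective i).injective,
    Set.image_preimage_eq _ (insertAt_bijective i).surjective]

theorem isLTRMin_insertAt_succAbove {i a : Fin (m + 2)} {σ : Perm (Fin (m + 1))}
    (hb : (σ 0).castSucc < a) (j : Fin (m + 1)) :
    IsLTRMin (insertAt i a σ) (i.succAbove j) ↔ IsLTRMin σ j := by
  simp only [IsLTRMin, Fin.forall_iff_succAbove i, insertAt_apply_self, insertAt_apply_succAbove,
    Fin.succAbove_lt_succAbove_iff]
  refine ⟨fun h => h.2, fun h => ⟨fun _ => ?_, h⟩⟩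
  -- a left-to-right minimum of `σ` lies below `σ 0`, hence below `a`
  rw [Fin.succAbove_lt_iff_castSucc_lt]
  exact lt_of_le_of_lt (Fin.castSucc_le_castSucc_iff.mpr (IsLTRMin.le_apply_zero h)) hb

theorem ltrMins_insertAt_zero {a : Fin (m + 2)} {σ : Perm (Fin (m + 1))}
    (hb : (σ 0).castSucc < a) : ltrMins (insertAt 0 a σ) = true :: ltrMins σ := by
  rw [ltrMins_succ]
  congr 1
  refine List.map_congr_left fun j _ => ?_
  rw [decide_eq_decide, ← Fin.succAbove_zero, isLTRMin_insertAt_succAbove hb]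

theorem ltrMins_insertAt_one {a : Fin (m + 2)} {σ : Perm (Fin (m + 1))}
    (hb : (σ 0).castSucc < a) :
    ltrMins (insertAt 1 a σ) = true :: false :: (ltrMins σ).tail := by
  rw [ltrMins_succ, ltrMins_succ σ, List.finRange_succ, List.map_cons, List.map_map,
    List.tail_cons]
  congr 2
  · have h0 : insertAt 1 a σ 0 < insertAt 1 a σ 1 := by
      rwa [insertAt_one_apply_zero, insertAt_apply_self, Fin.succAbove_lt_iff_castSucc_lt]
    exact decide_eq_false fun h => (h 0 Fin.zero_lt_one).not_gt h0
  · refine List.map_congr_left fun j _ => ?_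
    rw [Function.comp_apply, decide_eq_decide, ← Fin.one_succAbove_succ,
      isLTRMin_insertAt_succAbove hb]

end InsertAt

section Encodes

variable {m p k : ℕ}

theorem encodesWin_succ_iff (π : Perm (Fin (m + 1))) :
    EncodesWin (m + 1) p k π ↔ CompleteWin p k (ltrMins π) := by
  have hlen : (ltrMins π).length = m + 1 := by simp [ltrMins]
  simp [EncodesWin, CompleteWin, List.dropLast_eq_take, hlen]

theorem encodesWin_insertAt_zero (hk : 1 ≤ k) {a : Fin (m + 2)} {σ : Perm (Fin (m + 1))}
    (hb : (σ 0).castSucc < a) :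
    EncodesWin (m + 2) p (rotateLabel p k) (insertAt 0 a σ) ↔ EncodesWin (m + 1) p k σ := by
  rw [encodesWin_succ_iff, encodesWin_succ_iff, ltrMins_insertAt_zero hb]
  exact completeWin_true_cons hk (by simp [ltrMins_succ])

theorem encodesWin_insertAt_one (hm : m ≠ 0) (hp : 2 ≤ p) (hk : 1 ≤ k) {a : Fin (m + 2)}
    {σ : Perm (Fin (m + 1))} (hb : (σ 0).castSucc < a) :
    EncodesWin (m + 2) p (skipTwo k) (insertAt 1 a σ) ↔ EncodesWin (m + 1) (p - 1) k σ := by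
  rw [encodesWin_succ_iff, encodesWin_succ_iff, ltrMins_insertAt_one hb, ltrMins_succ σ,
    List.tail_cons]
  exact completeWin_true_false_cons hp hk (by simpa using hm)

theorem not_encodesWin_two_insertAt_one (hp : 2 ≤ p) {a : Fin (m + 2)} {σ : Perm (Fin (m + 1))}
    (hb : (σ 0).castSucc < a) : ¬ EncodesWin (m + 2) p 2 (insertAt 1 a σ) := by
  rw [encodesWin_succ_iff, ltrMins_insertAt_one hb]
  exact not_completeWin_two hp _

end Encodes

theorem ncard_setOf_and_mem_eq_sum {α β : Type*} [Finite α] (P : α → Prop) (f : α → β)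
    (t : Finset β) : {x | P x ∧ f x ∈ t}.ncard = ∑ b ∈ t, {x | P x ∧ f x = b}.ncard := by
  classical
  have := Fintype.ofFinite α
  simp only [Set.ncard_eq_toFinset_card', Set.toFinset_ofPred]
  rw [Finset.card_eq_sum_card_fiberwise (f := f) (t := t) fun x hx => by simp_all]
  refine Finset.sum_congr rfl fun b hb => congrArg Finset.card ?_
  ext x
  simp only [Finset.mem_filter, Finset.mem_univ, true_and]
  constructor
  · rintro ⟨⟨hP, -⟩, rfl⟩
    exact ⟨hP, rfl⟩
  · rintro ⟨hP, rfl⟩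
    exact ⟨⟨hP, hb⟩, rfl⟩

theorem w_succ (m p k s : ℕ) :
    w (m + 1) p k s =
      {σ : Perm (Fin (m + 1)) | EncodesWin (m + 1) p k σ ∧ (σ 0 : ℕ) + 1 = s}.ncard := by
  simp [w, Fin.val_eq_zero_iff]

noncomputable def wDesc (m p k : ℕ) (a : Fin (m + 2)) : ℕ :=
  {π : Perm (Fin (m + 2)) | EncodesWin (m + 2) p k π ∧ π 0 = a ∧ π 1 < π 0}.ncard

noncomputable def wAsc (m p k : ℕ) (a : Fin (m + 2)) : ℕ :=
  {π : Perm (Fin (m + 2)) | EncodesWin (m + 2) p k π ∧ π 0 = a ∧ π 0 < π 1}.ncard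

theorem w_eq_wDesc_add_wAsc (m p k : ℕ) (a : Fin (m + 2)) :
    w (m + 2) p k (a + 1) = wDesc m p k a + wAsc m p k a := by
  rw [w_succ, wDesc, wAsc, ← Set.ncard_union_eq]
  · congr 1
    ext π
    have hne : π 1 ≠ π 0 := π.injective.ne (by simp)
    simp only [Set.mem_ofPred_eq, Set.mem_union, add_left_inj, ← Fin.ext_iff]
    constructor
    · rintro ⟨he, rfl⟩
      rcases hne.lt_or_gt with h | h
      exacts [Or.inl ⟨he, rfl, h⟩, Or.inr ⟨he, rfl, h⟩]
    · rintro (⟨he, rfl, -⟩ | ⟨he, rfl, -⟩) <;> exact ⟨he, rfl⟩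
  · rw [Set.disjoint_left]
    rintro π ⟨-, -, h⟩ ⟨-, -, h'⟩
    exact h.not_gt h'

variable {m p k : ℕ}

theorem wDesc_rotateLabel (hk : 1 ≤ k) (a : Fin (m + 2)) :
    wDesc m p (rotateLabel p k) a = ∑ s ∈ Finset.Icc 1 (a : ℕ), w (m + 1) p k s := by
  have hpre : Function.uncurry (insertAt 0) ⁻¹'
      {π | EncodesWin (m + 2) p (rotateLabel p k) π ∧ π 0 = a ∧ π 1 < π 0} =
      {a} ×ˢ
        {σ | EncodesWin (m + 1) p k σ ∧ (σ 0 : ℕ) + 1 ∈ Finset.Icc 1 (a : ℕ)} := by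
    ext ⟨b, σ⟩
    simp only [Set.mem_preimage, Function.uncurry_apply_pair, Set.mem_ofPred_eq,
      insertAt_apply_self, insertAt_zero_apply_one, Fin.succAbove_lt_iff_castSucc_lt,
      Set.mem_prod, Set.mem_singleton_iff, Finset.mem_Icc]
    constructor
    · rintro ⟨he, rfl, hb⟩
      have hσ : (σ 0 : ℕ) < b := hb
      exact ⟨rfl, (encodesWin_insertAt_zero hk hb).mp he, by omega, by omega⟩
    · rintro ⟨rfl, he, -, hσ⟩
      have hb : (σ 0).castSucc < b := Fin.lt_def.mpr (by simp; omega)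
      exact ⟨(encodesWin_insertAt_zero hk hb).mpr he, rfl, hb⟩
  rw [wDesc, ncard_eq_ncard_preimage_insertAt 0, hpre, Set.ncard_prod, Set.ncard_singleton,
    one_mul, ncard_setOf_and_mem_eq_sum]
  simp only [w_succ]

theorem wAsc_skipTwo (hm : m ≠ 0) (hp : 2 ≤ p) (hk : 1 ≤ k) (a : Fin (m + 2)) :
    wAsc m p (skipTwo k) a = (m + 1 - a) * w (m + 1) (p - 1) k (a + 1) := by
  have hpre : Function.uncurry (insertAt 1) ⁻¹'
      {π | EncodesWin (m + 2) p (skipTwo k) π ∧ π 0 = a ∧ π 0 < π 1} =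
      Set.Ioi a ×ˢ {σ | EncodesWin (m + 1) (p - 1) k σ ∧ (σ 0 : ℕ) + 1 = a + 1} := by
    ext ⟨b, σ⟩
    simp only [Set.mem_preimage, Function.uncurry_apply_pair, Set.mem_ofPred_eq,
      insertAt_apply_self, insertAt_one_apply_zero, Set.mem_prod, Set.mem_Ioi, add_left_inj]
    constructor
    · rintro ⟨he, rfl, hlt⟩
      have hb := (Fin.succAbove_lt_iff_castSucc_lt _ _).mp hlt
      rw [Fin.succAbove_of_castSucc_lt _ _ hb]
      exact ⟨hb, (encodesWin_insertAt_one hm hp hk hb).mp he, rfl⟩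
    · rintro ⟨hab, he, hσ⟩
      have hσa : (σ 0).castSucc = a := Fin.ext hσ
      have hb : (σ 0).castSucc < b := hσa ▸ hab
      rw [Fin.succAbove_of_castSucc_lt _ _ hb, hσa]
      exact ⟨(encodesWin_insertAt_one hm hp hk hb).mpr he, rfl, hab⟩
  rw [wAsc, ncard_eq_ncard_preimage_insertAt 1, hpre, Set.ncard_prod, ← Finset.coe_Ioi,
    Set.ncard_coe_finset, Fin.card_Ioi, w_succ]
  rfl

theorem wAsc_two (hp : 2 ≤ p) (a : Fin (m + 2)) : wAsc m p 2 a = 0 := by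
  rw [wAsc, ncard_eq_ncard_preimage_insertAt 1, Set.ncard_eq_zero,
    Set.eq_empty_iff_forall_notMem]
  rintro ⟨b, σ⟩ ⟨he, -, hlt⟩
  rw [Function.uncurry_apply_pair, insertAt_one_apply_zero, insertAt_apply_self,
    Fin.succAbove_lt_iff_castSucc_lt] at hlt
  exact not_encodesWin_two_insertAt_one hp hlt he

end DartGame

theorem w_recurrence_general (n p k s : ℕ) (hn : 3 ≤ n) (hp : 2 ≤ p) (hkp : k ≤ p)
    (hs1 : 1 ≤ s) (hsn : s ≤ n) :
    (k = 1 →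
      w n p 1 s = (∑ s' ∈ Finset.Icc 1 (s - 1), w (n - 1) p p s')
        + (n - s) * w (n - 1) (p - 1) 1 s) ∧
    (k = 2 →
      w n p 2 s = ∑ s' ∈ Finset.Icc 1 (s - 1), w (n - 1) p 1 s') ∧
    (3 ≤ k →
      w n p k s = (∑ s' ∈ Finset.Icc 1 (s - 1), w (n - 1) p (k - 1) s')
        + (n - s) * w (n - 1) (p - 1) (k - 1) s) := by
  obtain ⟨m, rfl⟩ : ∃ m, n = m + 2 := ⟨n - 2, by omega⟩
  obtain ⟨a, rfl⟩ : ∃ a : Fin (m + 2), s = a + 1 :=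
    ⟨⟨s - 1, by omega⟩, by simp only; omega⟩
  have hm : m ≠ 0 := by omega
  rw [show m + 2 - (a + 1) = m + 1 - a by omega, show m + 2 - 1 = m + 1 from rfl,
    Nat.add_sub_cancel]
  refine ⟨fun _ => ?_, fun _ => ?_, fun hk => ?_⟩
  · have hdesc := DartGame.wDesc_rotateLabel (p := p) (k := p) (by omega) a
    have hasc := DartGame.wAsc_skipTwo hm hp le_rfl a
    rw [DartGame.rotateLabel_self] at hdesc
    rw [DartGame.skipTwo_one] at hasc
    rw [DartGame.w_eq_wDesc_add_wAsc, hdesc, hasc]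
  · have hdesc := DartGame.wDesc_rotateLabel (p := p) le_rfl a
    rw [DartGame.rotateLabel_of_ne (by omega)] at hdesc
    rw [DartGame.w_eq_wDesc_add_wAsc, hdesc, DartGame.wAsc_two hp, add_zero]
  · have hdesc := DartGame.wDesc_rotateLabel (p := p) (k := k - 1) (by omega) a
    have hasc := DartGame.wAsc_skipTwo hm hp (k := k - 1) (by omega) a
    rw [DartGame.rotateLabel_of_ne (by omega), Nat.sub_add_cancel (by omega)] at hdesc
    rw [DartGame.skipTwo_of_ne (by omega), Nat.sub_add_cancel (by omega)] at hasc
    rw [DartGame.w_eq_wDesc_add_wAsc, hdesc, hasc]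

/-- The recurrence for the numbers `w_{n,p,k,s}`, for `n ≥ 3`, `p ≥ 2`, `1 ≤ k ≤ p`
and `1 ≤ s ≤ n`. -/
theorem w_recurrence (n p k s : ℕ) (hn : 3 ≤ n) (hp : 2 ≤ p) (hk1 : 1 ≤ k) (hkp : k ≤ p)
    (hs1 : 1 ≤ s) (hsn : s ≤ n) :
    (k = 1 →
      w n p 1 s = (∑ s' ∈ Finset.Icc 1 (s - 1), w (n - 1) p p s')
        + (n - s) * w (n - 1) (p - 1) 1 s) ∧
    (k = 2 →
      w n p 2 s = ∑ s' ∈ Finset.Icc 1 (s - 1), w (n - 1) p 1 s') ∧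
    (3 ≤ k →
      w n p k s = (∑ s' ∈ Finset.Icc 1 (s - 1), w (n - 1) p (k - 1) s')
        + (n - s) * w (n - 1) (p - 1) (k - 1) s) :=
  w_recurrence_general n p k s hn hp hkp hs1 hsn
end
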